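/- Combining the feature-reconstruction identity with the ball-volume bound: if x is protected by a passport s_β drawn uniformly from (-N,0)ᵐ (with W_p an invertible m×m matrix), the probability that an adversary, guessing a fixed passport s_β' and computing x̂ = W_p⁻¹(H - W_p s_β'), achieves ‖x - x̂‖₂ ≤ ε is at most π^{m/2} ε^m / (Γ(1 + m/2) N^m). -/

import Mathlib

/-! Since `Wp` is invertible, the reconstruction error is `x - x̂ = sβ' - sβ`, so the adversary
succeeds exactly when the uniform passport `sβ` falls into the closed `ε`-ball around the guess
`sβ'`. The success probability is therefore at most the volume of that ball divided by the volume
`N ^ m` of the cube. -/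

open MeasureTheory Real

namespace Matrix

theorem nonsing_inv_mulVec_add_sub {n R : Type*} [Fintype n] [DecidableEq n] [CommRing R]
    (A : Matrix n n R) (hA : IsUnit A.det) (x s s' : n → R) :
    A⁻¹ *ᵥ (A *ᵥ x + A *ᵥ s - A *ᵥ s') = x + (s - s') := by
  rw [← mulVec_add, ← mulVec_sub, mulVec_mulVec, nonsing_inv_mul _ hA, one_mulVec, add_sub_assoc]

end Matrix

namespace EuclideanSpace

variable {ι : Type*} [Fintype ι]

theorem volume_setOf_forall_mem_Ioo (a b : ℝ) :
    volume {s : EuclideanSpace ℝ ι | ∀ j, s j ∈ Set.Ioo a b} =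
      ENNReal.ofReal (b - a) ^ Fintype.card ι := by
  have hpre : {s : EuclideanSpace ℝ ι | ∀ j, s j ∈ Set.Ioo a b} =
      (MeasurableEquiv.toLp 2 (ι → ℝ)).symm ⁻¹' Set.univ.pi fun _ => Set.Ioo a b := by
    ext s
    simp [Set.mem_pi]
  rw [hpre, (volume_preserving_symm_measurableEquiv_toLp ι).measure_preimage
    (MeasurableSet.univ_pi fun _ => measurableSet_Ioo).nullMeasurableSet, Real.volume_pi_Ioo,
    Finset.prod_const, Finset.card_univ]

theorem volume_closedBall_eq_ofReal [Nonempty ι] (x : EuclideanSpace ℝ ι) {r : ℝ} (hr : 0 ≤ r) :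
    volume (Metric.closedBall x r) = ENNReal.ofReal
      (π ^ ((Fintype.card ι : ℝ) / 2) * r ^ Fintype.card ι /
        Gamma (1 + (Fintype.card ι : ℝ) / 2)) := by
  have hsqrt : √π ^ Fintype.card ι = π ^ ((Fintype.card ι : ℝ) / 2) := by
    rw [sqrt_eq_rpow, ← rpow_natCast, ← rpow_mul pi_nonneg, one_div_mul_eq_div]
  rw [volume_closedBall, ← ENNReal.ofReal_pow hr, ← ENNReal.ofReal_mul (by positivity), hsqrt,
    add_comm, mul_div_assoc', mul_comm (r ^ _)]

end EuclideanSpace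

/-- combining the reconstruction identity with the ball-volume bound,
the probability (over a passport drawn uniformly from `(-N,0)^m`) that the
adversary's reconstruction `x̂ = Wp⁻¹ (H - Wp sβ')` is within `ε` of `x`
(where `H = Wp x + Wp sβ`) is at most `π^(m/2) ε^m / (Γ(1+m/2) N^m)`. -/
theorem fedpass_feature_recovery_prob_le
    (m : ℕ) (hm : 0 < m) (N ε : ℝ) (hN : 0 < N) (hε : 0 < ε)
    (Wp : Matrix (Fin m) (Fin m) ℝ) (hW : IsUnit Wp.det)
    (x : EuclideanSpace ℝ (Fin m)) (sβ' : EuclideanSpace ℝ (Fin m))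
    (cube : Set (EuclideanSpace ℝ (Fin m)))
    (hcube : cube = {s | ∀ j, s j ∈ Set.Ioo (-N) 0})
    (H : EuclideanSpace ℝ (Fin m) → Fin m → ℝ)
    (hH : ∀ sβ, H sβ = Wp.mulVec ((WithLp.equiv 2 (Fin m → ℝ)) x) +
        Wp.mulVec ((WithLp.equiv 2 (Fin m → ℝ)) sβ))
    (xhat : EuclideanSpace ℝ (Fin m) → EuclideanSpace ℝ (Fin m))
    (hxhat : ∀ sβ, xhat sβ = (WithLp.equiv 2 (Fin m → ℝ)).symm
        (Wp⁻¹.mulVec (H sβ - Wp.mulVec ((WithLp.equiv 2 (Fin m → ℝ)) sβ')))) :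
    volume ({sβ : EuclideanSpace ℝ (Fin m) | ‖x - xhat sβ‖ ≤ ε} ∩ cube) / volume cube ≤
      ENNReal.ofReal (π ^ ((m : ℝ) / 2) * ε ^ m / (Real.Gamma (1 + (m : ℝ) / 2) * N ^ m)) := by
  have : Nonempty (Fin m) := ⟨⟨0, hm⟩⟩
  have hsuccess : {sβ | ‖x - xhat sβ‖ ≤ ε} = Metric.closedBall sβ' ε := by
    ext sβ
    have hrec : xhat sβ = x + (sβ - sβ') := by
      rw [hxhat, hH, Matrix.nonsing_inv_mulVec_add_sub _ hW]
      rfl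
    rw [Set.mem_ofPred_eq, Metric.mem_closedBall, dist_eq_norm, hrec, ← norm_neg]
    congr! 2
    abel
  have hvol_cube : volume cube = ENNReal.ofReal (N ^ m) := by
    rw [hcube, EuclideanSpace.volume_setOf_forall_mem_Ioo, sub_neg_eq_add, zero_add,
      Fintype.card_fin, ENNReal.ofReal_pow hN.le]
  calc volume ({sβ | ‖x - xhat sβ‖ ≤ ε} ∩ cube) / volume cube
      ≤ volume (Metric.closedBall sβ' ε) / volume cube := by
        rw [hsuccess]
        gcongr
        exact Set.inter_subset_left
    _ = _ := by
        rw [EuclideanSpace.volume_closedBall_eq_ofReal _ hε.le, hvol_cube, Fintype.card_fin,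
          ← ENNReal.ofReal_div_of_pos (by positivity), div_div]
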